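/- arXiv:1607.00443 — 5 statements merged into one kernel-verified Lean document; each statement's English description precedes it below -/
import Mathlib

section
/- Let 𝔽 be a field and let f₁,…,f_m ∈ 𝔽[x₁,…,x_n] be polynomials. Then f₁,…,f_m have no common zero in {0,1}ⁿ if and only if 1 belongs to the ideal of 𝔽[x₁,…,x_n] generated by f₁,…,f_m together with the boolean axioms x₁²−x₁,…,x_n²−x_n. -/
open MvPolynomial

set_option synthInstance.maxHeartbeats 1000000 in
/-- **Weak Nullstellensatz over the boolean cube.**
`f₁,…,f_m` have no common zero in `{0,1}ⁿ` iff `1` lies in the ideal generated by the `f_j`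
together with the boolean axioms `x_i² - x_i`. -/
theorem stmt_0 (F : Type*) [Field F] (n m : ℕ)
    (f : Fin m → MvPolynomial (Fin n) F) :
    (¬ ∃ e : Fin n → F, (∀ i, e i = 0 ∨ e i = 1) ∧ ∀ j, eval e (f j) = 0) ↔
      (1 : MvPolynomial (Fin n) F) ∈
        Ideal.span (Set.range f ∪ Set.range (fun i : Fin n => X i ^ 2 - X i)) := by
  classical
  set I : Ideal (MvPolynomial (Fin n) F) :=
    Ideal.span (Set.range f ∪ Set.range (fun i : Fin n => X i ^ 2 - X i)) with hI
  constructor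
  · intro h
    by_contra h1
    apply h
    have hI_ne : I ≠ ⊤ := by
      intro ht
      exact h1 (ht ▸ Submodule.mem_top)
    obtain ⟨M, hM, hIM⟩ := Ideal.exists_le_maximal I hI_ne
    haveI := hM
    haveI : Nontrivial (MvPolynomial (Fin n) F ⧸ M) := Ideal.Quotient.nontrivial_iff.mpr hM.ne_top
    let K := MvPolynomial (Fin n) F ⧸ M
    let φ : MvPolynomial (Fin n) F →ₐ[F] K := Ideal.Quotient.mkₐ F M
    have hker : ∀ p : MvPolynomial (Fin n) F, p ∈ M → φ p = 0 := by
      intro p hp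
      show Ideal.Quotient.mk M p = 0
      exact Ideal.Quotient.eq_zero_iff_mem.mpr hp
    have hbool : ∀ i, φ (X i) = 0 ∨ φ (X i) = 1 := by
      intro i
      have hmem : (X i ^ 2 - X i : MvPolynomial (Fin n) F) ∈ M :=
        hIM (Ideal.subset_span (Or.inr ⟨i, rfl⟩))
      have h0 : φ (X i) * (φ (X i) - 1) = 0 := by
        have := hker _ hmem
        rw [map_sub, map_pow] at this
        linear_combination this
      rcases mul_eq_zero.mp h0 with h' | h'
      · exact Or.inl h'
      · exact Or.inr (by linear_combination h')
    set e : Fin n → F := fun i => if φ (X i) = 0 then 0 else 1 with he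
    have heX : ∀ i, φ (X i) = algebraMap F K (e i) := by
      intro i
      rcases hbool i with h' | h'
      · simp [he, h']
      · have hne : φ (X i) ≠ 0 := by rw [h']; exact one_ne_zero
        simp [he, hne, h']
    refine ⟨e, fun i => by by_cases h' : φ (X i) = 0 <;> simp [he, h'], fun j => ?_⟩
    have hfj : φ (f j) = 0 := hker _ (hIM (Ideal.subset_span (Or.inl ⟨j, rfl⟩)))
    have hrepr : φ (f j) = algebraMap F K (eval e (f j)) := by
      have h1' : φ (f j) = aeval (fun i => φ (X i)) (f j) := by
        conv_lhs => rw [aeval_unique φ]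
        rfl
      rw [h1', funext heX]
      have h2' := comp_aeval_apply (f := e) (Algebra.ofId F K) (f j)
      have h3' : (aeval e) (f j) = eval e (f j) := by
        rw [aeval_def, Algebra.algebraMap_self]; rfl
      rw [h3'] at h2'
      simpa [Algebra.ofId_apply] using h2'.symm
    rw [hfj] at hrepr
    have hmap : algebraMap F K (eval e (f j)) = algebraMap F K 0 := by
      rw [map_zero, ← hrepr]
    exact (algebraMap F K).injective hmap
  · rintro h1 ⟨e, hb, hz⟩
    have hle : I ≤ RingHom.ker (eval e : MvPolynomial (Fin n) F →+* F) := by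
      rw [hI, Ideal.span_le]
      rintro p (⟨j, rfl⟩ | ⟨i, rfl⟩)
      · simpa [RingHom.mem_ker] using hz j
      · simp only [RingHom.mem_ker, map_sub, map_pow, eval_X]
        rcases hb i with h' | h' <;> simp [h']
    have := hle h1
    simp [RingHom.mem_ker] at this
end

section
/- Let 𝔽 be a field and let φ be a CNF formula over variables x₁,…,x_n consisting of clauses κ₁,…,κ_m with clause polynomials C₁,…,C_m ∈ 𝔽[x₁,…,x_n]. Then φ is unsatisfiable (no e ∈ {0,1}ⁿ satisfies every clause) if and only if 1 belongs to the ideal of 𝔽[x₁,…,x_n] generated by C₁,…,C_m; moreover, in that case there exist multilinear polynomials g₁,…,g_m with ∑_{i=1}^{m} g_i·C_i = 1 as a formal polynomial identity (no boolean axioms are needed). -/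
open MvPolynomial Finset

section Aux

variable {F : Type*} [Field F] {n : ℕ}

private noncomputable def fac (e : Fin n → Fin 2) (j : Fin n) : MvPolynomial (Fin n) F :=
  if e j = 1 then X j else 1 - X j

private lemma support_one' : (1 : MvPolynomial (Fin n) F).support ⊆ {0} := by
  rw [← C_1, C_apply]
  exact support_monomial_subset

private lemma fac_support (e : Fin n → Fin 2) (j : Fin n) :
    ∀ mo ∈ (fac (F := F) e j).support, ∀ k, mo k ≤ if k = j then 1 else 0 := by
  have hX : ∀ mo ∈ (X j : MvPolynomial (Fin n) F).support, ∀ k,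
      mo k ≤ if k = j then 1 else 0 := by
    intro mo hmo k
    rw [support_X] at hmo
    simp only [Finset.mem_singleton] at hmo
    subst hmo
    simp [Finsupp.single_apply]
    split <;> simp_all
  intro mo hmo k
  unfold fac at hmo
  split_ifs at hmo with h
  · exact hX mo hmo k
  · have hsub := MvPolynomial.support_sub (Fin n) (1 : MvPolynomial (Fin n) F) (X j) hmo
    rcases Finset.mem_union.1 hsub with h1 | h2
    · have : mo = 0 := Finset.mem_singleton.1 (support_one' h1)
      simp [this]
    · exact hX mo h2 k

private lemma ml_prod (s : Finset (Fin n)) (f : Fin n → MvPolynomial (Fin n) F)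
    (hf : ∀ j ∈ s, ∀ mo ∈ (f j).support, ∀ k, mo k ≤ if k = j then 1 else 0) :
    ∀ mo ∈ (∏ j ∈ s, f j).support, ∀ k, mo k ≤ if k ∈ s then 1 else 0 := by
  induction s using Finset.induction_on with
  | empty =>
    intro mo hmo k
    simp only [Finset.prod_empty] at hmo
    have : mo = 0 := Finset.mem_singleton.1 (support_one' hmo)
    simp [this]
  | @insert a s ha ih =>
    intro mo hmo k
    rw [Finset.prod_insert ha] at hmo
    have := MvPolynomial.support_mul _ _ hmo
    rw [Finset.mem_add] at this
    obtain ⟨m1, hm1, m2, hm2, rfl⟩ := this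
    have h1 := hf a (Finset.mem_insert_self a s) m1 hm1 k
    have h2 := ih (fun j hj => hf j (Finset.mem_insert_of_mem hj)) m2 hm2 k
    simp only [Finsupp.coe_add, Pi.add_apply]
    by_cases hk : k = a
    · subst hk
      have hns : k ∉ s := ha
      rw [if_pos rfl] at h1
      rw [if_neg hns] at h2
      rw [if_pos (Finset.mem_insert_self k s)]
      omega
    · simp only [if_neg hk] at h1
      by_cases hks : k ∈ s
      · simp only [if_pos hks] at h2
        rw [if_pos (Finset.mem_insert_of_mem hks)]
        omega
      · simp only [if_neg hks] at h2
        omega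

private lemma sum_delta :
    ∑ e : Fin n → Fin 2, ∏ j, fac (F := F) e j = 1 := by
  have key := Finset.prod_univ_sum (fun _ : Fin n => (Finset.univ : Finset (Fin 2)))
    (fun j v => if v = 1 then (X j : MvPolynomial (Fin n) F) else 1 - X j)
  rw [Fintype.piFinset_univ] at key
  have h1 : ∀ e : Fin n → Fin 2, ∏ j, fac (F := F) e j
      = ∏ j, (if e j = 1 then (X j : MvPolynomial (Fin n) F) else 1 - X j) := fun e => rfl
  simp only [h1]
  rw [← key]
  apply Finset.prod_eq_one
  intro j _
  rw [Fin.sum_univ_two]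
  norm_num

end Aux

/-- A CNF with clauses given by disjoint literal sets `(P i, N i)` and clause polynomials
`Cp i = ∏_{j∈P i}(1-x_j)·∏_{j∈N i} x_j` is unsatisfiable iff `1` lies in the ideal generated by
the clause polynomials; moreover in that case there are *multilinear* `g i` with
`∑ i, g i · Cp i = 1` (no boolean axioms needed). -/
theorem stmt_5 (F : Type*) [Field F] (n m : ℕ)
    (P N : Fin m → Finset (Fin n)) (hPN : ∀ i, Disjoint (P i) (N i))
    (Cp : Fin m → MvPolynomial (Fin n) F)
    (hCp : ∀ i, Cp i = (∏ j ∈ P i, (1 - X j)) * ∏ j ∈ N i, X j) :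
    ((¬ ∃ e : Fin n → Fin 2, ∀ i : Fin m,
        (∃ j ∈ P i, e j = 1) ∨ (∃ j ∈ N i, e j = 0)) ↔
      (1 : MvPolynomial (Fin n) F) ∈ Ideal.span (Set.range Cp)) ∧
    ((¬ ∃ e : Fin n → Fin 2, ∀ i : Fin m,
        (∃ j ∈ P i, e j = 1) ∨ (∃ j ∈ N i, e j = 0)) →
      ∃ g : Fin m → MvPolynomial (Fin n) F,
        (∀ i, ∀ mo ∈ (g i).support, ∀ j, mo j ≤ 1) ∧
        ∑ i : Fin m, g i * Cp i = 1) := by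
  classical
  -- main construction: from unsatisfiability build multilinear certificate
  have main : (¬ ∃ e : Fin n → Fin 2, ∀ i : Fin m,
        (∃ j ∈ P i, e j = 1) ∨ (∃ j ∈ N i, e j = 0)) →
      ∃ g : Fin m → MvPolynomial (Fin n) F,
        (∀ i, ∀ mo ∈ (g i).support, ∀ j, mo j ≤ 1) ∧
        ∑ i : Fin m, g i * Cp i = 1 := by
    intro hunsat
    -- for each assignment e, pick a falsified clause
    have hchoice : ∀ e : Fin n → Fin 2, ∃ i : Fin m,
        (∀ j ∈ P i, e j ≠ 1) ∧ (∀ j ∈ N i, e j ≠ 0) := by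
      intro e
      by_contra hcon
      push_neg at hcon
      refine hunsat ⟨e, fun i => ?_⟩
      by_cases hp : ∃ j ∈ P i, e j = 1
      · exact Or.inl hp
      · push_neg at hp
        exact Or.inr (hcon i hp)
    choose c hc1 hc2 using hchoice
    -- the "rest" multilinear polynomial for each assignment
    set h : (Fin n → Fin 2) → MvPolynomial (Fin n) F :=
      fun e => ∏ j ∈ (P (c e) ∪ N (c e))ᶜ, fac e j with hh
    -- delta factorization
    have hfact : ∀ e : Fin n → Fin 2, ∏ j, fac (F := F) e j = h e * Cp (c e) := by
      intro e
      rw [← Finset.prod_mul_prod_compl (P (c e) ∪ N (c e)) (fac e)]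
      rw [Finset.prod_union (hPN (c e))]
      have hP : ∏ j ∈ P (c e), fac (F := F) e j = ∏ j ∈ P (c e), (1 - X j) := by
        apply Finset.prod_congr rfl
        intro j hj
        unfold fac
        rw [if_neg (hc1 e j hj)]
      have hN : ∏ j ∈ N (c e), fac (F := F) e j = ∏ j ∈ N (c e), X j := by
        apply Finset.prod_congr rfl
        intro j hj
        unfold fac
        have : e j = 1 := by
          have := hc2 e j hj
          omega
        rw [if_pos this]
      rw [hP, hN, hCp (c e)]
      ring
    refine ⟨fun i => ∑ e ∈ Finset.univ.filter (fun e => c e = i), h e, ?_, ?_⟩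
    · intro i mo hmo j
      have := MvPolynomial.support_sum hmo
      rw [Finset.mem_biUnion] at this
      obtain ⟨e, _, hmoe⟩ := this
      have := ml_prod ((P (c e) ∪ N (c e))ᶜ) (fac e) (fun j _ => fac_support e j) mo hmoe j
      split_ifs at this <;> omega
    · calc ∑ i : Fin m, (∑ e ∈ Finset.univ.filter (fun e => c e = i), h e) * Cp i
          = ∑ i : Fin m, ∑ e ∈ Finset.univ.filter (fun e => c e = i), h e * Cp i := by
            simp [Finset.sum_mul]
        _ = ∑ i : Fin m, ∑ e ∈ Finset.univ.filter (fun e => c e = i), h e * Cp (c e) := by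
            apply Finset.sum_congr rfl
            intro i _
            apply Finset.sum_congr rfl
            intro e he
            rw [(Finset.mem_filter.1 he).2]
        _ = ∑ e : Fin n → Fin 2, h e * Cp (c e) :=
            Finset.sum_fiberwise _ _ _
        _ = ∑ e : Fin n → Fin 2, ∏ j, fac (F := F) e j := by
            apply Finset.sum_congr rfl
            intro e _
            rw [hfact e]
        _ = 1 := sum_delta
  constructor
  · constructor
    · intro hunsat
      obtain ⟨g, _, hg⟩ := main hunsat
      rw [← hg]
      exact Ideal.sum_mem _ fun i _ =>
        Ideal.mul_mem_left _ _ (Ideal.subset_span ⟨i, rfl⟩)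
    · -- if 1 ∈ ideal, formula is unsatisfiable
      intro hmem ⟨e, he⟩
      -- evaluate at e
      set ev : MvPolynomial (Fin n) F →+* F := eval (fun j => ((e j : ℕ) : F)) with hev
      have hker : Ideal.span (Set.range Cp) ≤ RingHom.ker ev := by
        rw [Ideal.span_le]
        rintro _ ⟨i, rfl⟩
        rw [SetLike.mem_coe, RingHom.mem_ker]
        rcases he i with ⟨j, hj, hj1⟩ | ⟨j, hj, hj0⟩
        · simp only [hev, hCp i, map_mul]
          have : eval (fun j => ((e j : ℕ) : F)) (∏ j ∈ P i, (1 - X j)) = 0 := by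
            rw [map_prod]
            apply Finset.prod_eq_zero hj
            simp [hj1]
          rw [this, zero_mul]
        · simp only [hev, hCp i, map_mul]
          have : eval (fun j => ((e j : ℕ) : F)) (∏ j ∈ N i, X j) = 0 := by
            rw [map_prod]
            apply Finset.prod_eq_zero hj
            simp [hj0]
          rw [this, mul_zero]
      have := hker hmem
      rw [RingHom.mem_ker] at this
      simp [hev] at this
  · exact main
end

section
/- Let 𝔽 be a field and let φ be an unsatisfiable CNF formula over variables x₁,…,x_n with clauses κ₁,…,κ_m and clause polynomials C₁,…,C_m. For i = 1,…,m let A_i := { e ∈ {0,1}ⁿ : e falsifies κ_i and e satisfies κ_j for all j < i }, and let V_i ⊆ {1,…,n} be the set of indices of variables occurring in κ_i. Then the following formal identity holds in 𝔽[x₁,…,x_n]: 1 = ∑_{i=1}^{m} C_i · ( ∑_{e ∈ A_i} ∏_{j ∉ V_i} b(e_j, x_j) ), where b(e,x) := e·x + (1−e)·(1−x). -/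
open MvPolynomial

open scoped Classical

set_option maxHeartbeats 1000000 in
/-- The explicit IPS certificate from the greedy partition: for an unsatisfiable CNF with clause
polynomials `Cp i`, writing `A i` for the set of boolean assignments falsifying clause `i` and
satisfying all earlier clauses, and `V i = P i ∪ N i` for the variables of clause `i`, we have
`1 = ∑ᵢ Cp i · (∑_{e ∈ A i} ∏_{j ∉ V i} b(e_j, x_j))`. -/
theorem stmt_6 (F : Type*) [Field F] (n m : ℕ)
    (P N : Fin m → Finset (Fin n)) (hPN : ∀ i, Disjoint (P i) (N i))
    (Cp : Fin m → MvPolynomial (Fin n) F)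
    (hCp : ∀ i, Cp i = (∏ j ∈ P i, (1 - X j)) * ∏ j ∈ N i, X j)
    (Sat : (Fin n → Fin 2) → Fin m → Prop)
    (hSat : ∀ e i, Sat e i ↔ ((∃ j ∈ P i, e j = 1) ∨ (∃ j ∈ N i, e j = 0)))
    (hUnsat : ¬ ∃ e : Fin n → Fin 2, ∀ i : Fin m, Sat e i)
    (A : Fin m → Finset (Fin n → Fin 2))
    (hA : ∀ i, A i = Finset.univ.filter (fun e => ¬ Sat e i ∧ ∀ j, j < i → Sat e j)) :
    (1 : MvPolynomial (Fin n) F) =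
      ∑ i : Fin m, Cp i *
        ∑ e ∈ A i, ∏ j ∈ Finset.univ \ (P i ∪ N i),
          (C (((e j : ℕ) : F)) * X j + C (1 - ((e j : ℕ) : F)) * (1 - X j)) := by
  set b : (Fin n → Fin 2) → Fin n → MvPolynomial (Fin n) F :=
    fun e j => C (((e j : ℕ) : F)) * X j + C (1 - ((e j : ℕ) : F)) * (1 - X j) with hb
  -- Step 1: the unit identity on the cube
  have key1 : (1 : MvPolynomial (Fin n) F) = ∑ e : Fin n → Fin 2, ∏ j, b e j := by
    have h := Finset.prod_univ_sum (fun _ : Fin n => (Finset.univ : Finset (Fin 2)))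
      (fun j v => C (((v : ℕ) : F)) * X j + C (1 - ((v : ℕ) : F)) * (1 - X j))
    have hone : ∀ j : Fin n,
        (∑ v : Fin 2, (C (((v : ℕ) : F)) * X j + C (1 - ((v : ℕ) : F)) * (1 - X j)))
          = (1 : MvPolynomial (Fin n) F) := by
      intro j
      simp only [Fin.sum_univ_two, Fin.val_zero, Fin.val_one, Nat.cast_zero, Nat.cast_one,
        map_zero, map_one, sub_zero, sub_self]
      ring
    rw [Fintype.piFinset_univ] at h
    calc (1 : MvPolynomial (Fin n) F) = ∏ j : Fin n, (1 : MvPolynomial (Fin n) F) := by simp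
      _ = ∏ j : Fin n, ∑ v : Fin 2,
            (C (((v : ℕ) : F)) * X j + C (1 - ((v : ℕ) : F)) * (1 - X j)) := by
          exact Finset.prod_congr rfl fun j _ => (hone j).symm
      _ = ∑ e : Fin n → Fin 2, ∏ j, b e j := h
  -- Step 2: minimal falsified clause
  have hS : ∀ e : Fin n → Fin 2,
      (Finset.univ.filter (fun i : Fin m => ¬ Sat e i)).Nonempty := by
    intro e
    by_contra h
    rw [Finset.not_nonempty_iff_eq_empty, Finset.filter_eq_empty_iff] at h
    exact hUnsat ⟨e, fun i => not_not.mp (h (Finset.mem_univ i))⟩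
  set g : (Fin n → Fin 2) → Fin m :=
    fun e => (Finset.univ.filter (fun i : Fin m => ¬ Sat e i)).min' (hS e) with hg
  have hAi : ∀ i, A i = Finset.univ.filter (fun e => g e = i) := by
    intro i
    rw [hA i]
    apply Finset.filter_congr
    intro e _
    simp only [hg]
    constructor
    · rintro ⟨h1, h2⟩
      apply le_antisymm
      · exact Finset.min'_le (Finset.univ.filter (fun i : Fin m => ¬ Sat e i)) i (by simp [h1])
      · apply Finset.le_min'
        intro y hy
        simp only [Finset.mem_filter] at hy
        by_contra hlt
        exact hy.2 (h2 y (lt_of_not_ge hlt))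
    · rintro rfl
      constructor
      · have := Finset.min'_mem _ (hS e)
        simpa using this
      · intro j hj
        by_contra hns
        have := Finset.min'_le (Finset.univ.filter (fun i : Fin m => ¬ Sat e i)) j (by simp [hns])
        omega
  -- Step 3: fiberwise sum
  have key2 : (∑ e : Fin n → Fin 2, ∏ j, b e j)
      = ∑ i : Fin m, ∑ e ∈ A i, ∏ j, b e j := by
    rw [← Finset.sum_fiberwise Finset.univ g (fun e => ∏ j, b e j)]
    exact Finset.sum_congr rfl fun i _ => by rw [hAi i]
  -- Step 4: per-fiber factorization
  have key3 : ∀ i, ∀ e ∈ A i, (∏ j, b e j)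
      = Cp i * ∏ j ∈ Finset.univ \ (P i ∪ N i), b e j := by
    intro i e he
    rw [hA i, Finset.mem_filter] at he
    obtain ⟨-, hns, -⟩ := he
    rw [hSat] at hns
    push_neg at hns
    obtain ⟨hP, hN⟩ := hns
    have hP0 : ∀ j ∈ P i, e j = 0 := fun j hj => by have := hP j hj; omega
    have hN1 : ∀ j ∈ N i, e j = 1 := fun j hj => by have := hN j hj; omega
    have hprodP : (∏ j ∈ P i, b e j) = ∏ j ∈ P i, (1 - X j) := by
      refine Finset.prod_congr rfl fun j hj => ?_
      rw [hb]
      simp only [hP0 j hj, Fin.val_zero, Nat.cast_zero, map_zero, zero_mul, zero_add,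
        sub_zero, map_one, one_mul]
    have hprodN : (∏ j ∈ N i, b e j) = ∏ j ∈ N i, X j := by
      refine Finset.prod_congr rfl fun j hj => ?_
      rw [hb]
      simp only [hN1 j hj, Fin.val_one, Nat.cast_one, map_one, one_mul, sub_self,
        map_zero, zero_mul, add_zero]
    have hsub : P i ∪ N i ⊆ Finset.univ := Finset.subset_univ _
    calc (∏ j, b e j)
        = (∏ j ∈ Finset.univ \ (P i ∪ N i), b e j) * ∏ j ∈ P i ∪ N i, b e j :=
          (Finset.prod_sdiff hsub).symm
      _ = (∏ j ∈ Finset.univ \ (P i ∪ N i), b e j) *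
            ((∏ j ∈ P i, b e j) * ∏ j ∈ N i, b e j) := by
          rw [Finset.prod_union (hPN i)]
      _ = Cp i * ∏ j ∈ Finset.univ \ (P i ∪ N i), b e j := by
          rw [hprodP, hprodN, hCp i]; ring
  conv_lhs => rw [key1, key2]
  refine Finset.sum_congr rfl fun i _ => ?_
  rw [Finset.mul_sum]
  exact Finset.sum_congr rfl fun e he => key3 i e he
end

section
/- Let 𝔽 be a field and f₁,…,f_m ∈ 𝔽[x₁,…,x_n]. There exists a polynomial C ∈ 𝔽[x₁,…,x_n, y₁,…,y_m, z₁,…,z_n] such that (1) C(x̄, 0̄, 0̄) = 0 and (2) C(x̄, f₁(x̄),…,f_m(x̄), x₁²−x₁,…,x_n²−x_n) = 1 as a formal polynomial identity, if and only if f₁,…,f_m have no common zero in {0,1}ⁿ. -/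
/-!
Substituting `g` or `0` for the placeholders gives the same result modulo the ideal generated
by `g`, and a combination `∑ cⱼ gⱼ = p` is the value of the certificate `∑ cⱼ yⱼ`; so a
certificate for `p` exists exactly when `p` lies in that ideal. It remains to see that the ideal
`I` generated by the `fⱼ` and the `xᵢ² - xᵢ` is proper iff they have a Boolean common zero `e`.
If `e` exists, `I ⊆ ker (eval e)`. If `I` is proper, choose a maximal ideal `M ⊇ I`: in the
field `F[x̄]/M` every `xᵢ` is idempotent, hence the image of some `eᵢ ∈ {0, 1}`, and since
`F → F[x̄]/M` is injective, `fⱼ ∈ M` forces `fⱼ(e) = 0`.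
-/

open MvPolynomial

namespace MvPolynomial

variable {R σ ι : Type*} [CommRing R]

theorem aeval_sum_elim_sub_mem_span (g : ι → MvPolynomial σ R) (C : MvPolynomial (σ ⊕ ι) R) :
    aeval (Sum.elim X g) C - aeval (Sum.elim X (0 : ι → MvPolynomial σ R)) C ∈
      Ideal.span (Set.range g) := by
  rw [← Ideal.Quotient.eq]
  simp only [← Ideal.Quotient.mkₐ_eq_mk R, ← AlgHom.comp_apply, comp_aeval]
  congr 2
  ext (i | i)
  · rfl
  · simp

theorem exists_certificate_iff_mem_span (g : ι → MvPolynomial σ R) (p : MvPolynomial σ R) :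
    (∃ C : MvPolynomial (σ ⊕ ι) R,
        aeval (Sum.elim X (0 : ι → MvPolynomial σ R)) C = 0 ∧ aeval (Sum.elim X g) C = p) ↔
      p ∈ Ideal.span (Set.range g) := by
  constructor
  · rintro ⟨C, h0, hg⟩
    simpa only [h0, hg, sub_zero] using aeval_sum_elim_sub_mem_span g C
  · intro hp
    obtain ⟨c, rfl⟩ := Finsupp.mem_span_range_iff_exists_finsupp.mp hp
    refine ⟨c.sum fun i a => rename Sum.inl a * X (Sum.inr i), ?_, ?_⟩ <;>
      simp [map_finsuppSum, bind₁_rename]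

theorem span_union_X_sq_sub_X_ne_top [Nontrivial R] {f : ι → MvPolynomial σ R} {e : σ → R}
    (he : ∀ i, e i = 0 ∨ e i = 1) (hf : ∀ j, eval e (f j) = 0) :
    Ideal.span (Set.range f ∪ Set.range fun i => X i ^ 2 - X i) ≠ ⊤ := by
  refine ne_top_of_le_ne_top (RingHom.ker_ne_top (eval e)) (Ideal.span_le.mpr ?_)
  rintro _ (⟨j, rfl⟩ | ⟨i, rfl⟩)
  · exact hf j
  · rcases he i with h | h <;> simp [h]

theorem exists_boolean_common_zero_of_span_union_X_sq_sub_X_ne_top {F : Type*} [Field F]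
    {f : ι → MvPolynomial σ F}
    (h : Ideal.span (Set.range f ∪ Set.range fun i => X i ^ 2 - X i) ≠ ⊤) :
    ∃ e : σ → F, (∀ i, e i = 0 ∨ e i = 1) ∧ ∀ j, eval e (f j) = 0 := by
  obtain ⟨M, hM, hle⟩ := Ideal.exists_le_maximal _ h
  let _ : Field (MvPolynomial σ F ⧸ M) := Ideal.Quotient.field M
  set π := Ideal.Quotient.mkₐ F M
  have hπ : ∀ p, π p = 0 ↔ p ∈ M := fun p => Ideal.Quotient.eq_zero_iff_mem
  have hX : ∀ i, ∃ b : F, (b = 0 ∨ b = 1) ∧ algebraMap F _ b = π (X i) := fun i => by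
    have : π (X i) = 0 ∨ π (X i) = 1 := by
      rw [← IsIdempotentElem.iff_eq_zero_or_one, IsIdempotentElem, ← sq, ← sub_eq_zero,
        ← map_pow, ← map_sub, hπ]
      exact hle (Ideal.subset_span (Or.inr ⟨i, rfl⟩))
    rcases this with h | h
    · exact ⟨0, .inl rfl, by rw [h, map_zero]⟩
    · exact ⟨1, .inr rfl, by rw [h, map_one]⟩
  choose e he hπe using hX
  refine ⟨e, he, fun j => (algebraMap F (MvPolynomial σ F ⧸ M)).injective ?_⟩
  rw [map_zero, ← aeval_eq_eval, ← aeval_algebraMap_apply,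
    show algebraMap F _ ∘ e = π ∘ X from _root_.funext hπe, ← aeval_unique, hπ]
  exact hle (Ideal.subset_span (Or.inl ⟨j, rfl⟩))

theorem span_union_X_sq_sub_X_eq_top_iff {F : Type*} [Field F] (f : ι → MvPolynomial σ F) :
    Ideal.span (Set.range f ∪ Set.range fun i => X i ^ 2 - X i) = ⊤ ↔
      ¬∃ e : σ → F, (∀ i, e i = 0 ∨ e i = 1) ∧ ∀ j, eval e (f j) = 0 := by
  refine ⟨fun h ⟨e, he, hf⟩ => span_union_X_sq_sub_X_ne_top he hf h, fun h => ?_⟩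
  by_contra hne
  exact h (exists_boolean_common_zero_of_span_union_X_sq_sub_X_ne_top hne)

end MvPolynomial

/-- **Soundness and completeness of IPS.** There exists an IPS certificate
`C(x̄, ȳ, z̄)` — i.e. `C(x̄,0̄,0̄) = 0` and substituting `y_j ↦ f_j` and `z_i ↦ x_i² - x_i`
gives the constant `1` — iff `f₁,…,f_m` have no common zero in `{0,1}ⁿ`. -/
theorem stmt_7 (F : Type*) [Field F] (n m : ℕ)
    (f : Fin m → MvPolynomial (Fin n) F) :
    (∃ Cert : MvPolynomial (Fin n ⊕ (Fin m ⊕ Fin n)) F,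
        aeval (Sum.elim X (Sum.elim (fun _ => (0 : MvPolynomial (Fin n) F))
          (fun _ => (0 : MvPolynomial (Fin n) F)))) Cert = 0 ∧
        aeval (Sum.elim X (Sum.elim f (fun i => X i ^ 2 - X i))) Cert = 1) ↔
      ¬ ∃ e : Fin n → F, (∀ i, e i = 0 ∨ e i = 1) ∧ ∀ j, eval e (f j) = 0 := by
  rw [Sum.elim_lam_const_lam_const, ← Pi.zero_def, exists_certificate_iff_mem_span,
    Set.Sum.elim_range, ← Ideal.eq_top_iff_one]
  exact span_union_X_sq_sub_X_eq_top_iff f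
end

section
/- Let 𝔽 be a field, n a natural number, and f₁,…,f_m ∈ 𝔽⟨x₁,…,x_n⟩ non-commutative polynomials. Let π : 𝔽⟨x₁,…,x_n⟩ → 𝔽[x₁,…,x_n] be the canonical abelianization homomorphism. Then 1 belongs to the two-sided ideal of 𝔽⟨x₁,…,x_n⟩ generated by f₁,…,f_m together with the boolean axioms x_i²−x_i (1 ≤ i ≤ n) and the commutator axioms x_i·x_j − x_j·x_i (1 ≤ i < j ≤ n), if and only if the commutative polynomials π(f₁),…,π(f_m) have no common zero in {0,1}ⁿ. -/
open MvPolynomial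

section Aux

variable (F : Type*) [Field F] (n : ℕ)

/-- The set of commutator axioms. -/
def commSet : Set (FreeAlgebra F (Fin n)) :=
  { p : FreeAlgebra F (Fin n) | ∃ i j : Fin n, i < j ∧
      p = FreeAlgebra.ι F i * FreeAlgebra.ι F j - FreeAlgebra.ι F j * FreeAlgebra.ι F i }

variable {F n}

lemma gen_comm_mem (i j : Fin n) :
    FreeAlgebra.ι F i * FreeAlgebra.ι F j - FreeAlgebra.ι F j * FreeAlgebra.ι F i ∈
      TwoSidedIdeal.span (commSet F n) := by
  rcases lt_trichotomy i j with h | h | h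
  · exact TwoSidedIdeal.subset_span ⟨i, j, h, rfl⟩
  · subst h; simpa using (TwoSidedIdeal.span (commSet F n)).zero_mem
  · have := (TwoSidedIdeal.span (commSet F n)).neg_mem
      (TwoSidedIdeal.subset_span (s := commSet F n) ⟨j, i, h, rfl⟩)
    simpa [neg_sub] using this

lemma iota_comm_mem (i : Fin n) (b : FreeAlgebra F (Fin n)) :
    FreeAlgebra.ι F i * b - b * FreeAlgebra.ι F i ∈ TwoSidedIdeal.span (commSet F n) := by
  set T := TwoSidedIdeal.span (commSet F n) with hT
  induction b with
  | grade0 r =>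
    simpa [Algebra.commutes] using T.zero_mem
  | grade1 j => exact gen_comm_mem i j
  | mul a b ha hb =>
    have key := T.add_mem (T.mul_mem_right _ b ha) (T.mul_mem_left a _ hb)
    have : FreeAlgebra.ι F i * (a * b) - a * b * FreeAlgebra.ι F i =
        (FreeAlgebra.ι F i * a - a * FreeAlgebra.ι F i) * b +
          a * (FreeAlgebra.ι F i * b - b * FreeAlgebra.ι F i) := by noncomm_ring
    rw [this]; exact key
  | add a b ha hb =>
    have key := T.add_mem ha hb
    have : FreeAlgebra.ι F i * (a + b) - (a + b) * FreeAlgebra.ι F i =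
        (FreeAlgebra.ι F i * a - a * FreeAlgebra.ι F i) +
          (FreeAlgebra.ι F i * b - b * FreeAlgebra.ι F i) := by noncomm_ring
    rw [this]; exact key

lemma comm_mem (a b : FreeAlgebra F (Fin n)) :
    a * b - b * a ∈ TwoSidedIdeal.span (commSet F n) := by
  set T := TwoSidedIdeal.span (commSet F n) with hT
  induction a with
  | grade0 r => simpa [Algebra.commutes] using T.zero_mem
  | grade1 i => exact iota_comm_mem i b
  | mul a c ha hc =>
    have key := T.add_mem (T.mul_mem_left a _ hc) (T.mul_mem_right _ c ha)
    have : a * c * b - b * (a * c) =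
        a * (c * b - b * c) + (a * b - b * a) * c := by noncomm_ring
    rw [this]; exact key
  | add a c ha hc =>
    have key := T.add_mem ha hc
    have : (a + c) * b - b * (a + c) = (a * b - b * a) + (c * b - b * c) := by noncomm_ring
    rw [this]; exact key

/-- kernel of the abelianization is contained in the commutator ideal. -/
lemma ker_pi_le (a : FreeAlgebra F (Fin n))
    (ha : (FreeAlgebra.lift F (fun i : Fin n => (X i : MvPolynomial (Fin n) F))) a = 0) :
    a ∈ TwoSidedIdeal.span (commSet F n) := by
  set T := TwoSidedIdeal.span (commSet F n) with hT
  -- the quotient by `T` is a commutative ring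
  letI : CommRing T.ringCon.Quotient :=
    { (inferInstance : Ring T.ringCon.Quotient) with
      mul_comm := by
        intro x y
        obtain ⟨a, rfl⟩ := Quotient.exists_rep x
        obtain ⟨b, rfl⟩ := Quotient.exists_rep y
        have h1 : (T.ringCon.mk' a) * (T.ringCon.mk' b) - (T.ringCon.mk' b) * (T.ringCon.mk' a)
            = T.ringCon.mk' (a * b - b * a) := by
          simp [map_sub, map_mul]
        have h2 : T.ringCon.mk' (a * b - b * a) = 0 := by
          have : a * b - b * a ∈ TwoSidedIdeal.ker T.ringCon.mk' := by
            rw [TwoSidedIdeal.ker_ringCon_mk']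
            exact comm_mem a b
          rwa [TwoSidedIdeal.mem_ker] at this
        have := sub_eq_zero.mp (h1.trans h2)
        exact this }
  -- the induced map from the polynomial ring
  let ψ : MvPolynomial (Fin n) F →+* T.ringCon.Quotient :=
    MvPolynomial.eval₂Hom (T.ringCon.mk'.comp (algebraMap F (FreeAlgebra F (Fin n))))
      (fun i => T.ringCon.mk' (FreeAlgebra.ι F i))
  set π := (FreeAlgebra.lift F (fun i : Fin n => (X i : MvPolynomial (Fin n) F)))
  have hcomp : ∀ c : FreeAlgebra F (Fin n), ψ (π c) = T.ringCon.mk' c := by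
    intro c
    induction c with
    | grade0 r =>
      simp only [AlgHom.commutes, MvPolynomial.algebraMap_eq]
      simp [ψ]
    | grade1 i => simp [π, ψ, FreeAlgebra.lift_ι_apply]
    | mul a b ha hb => simp [map_mul, ha, hb]
    | add a b ha hb => simp [map_add, ha, hb]
  have : T.ringCon.mk' a = 0 := by
    rw [← hcomp a, ha, map_zero]
  have : a ∈ TwoSidedIdeal.ker T.ringCon.mk' := by
    rw [TwoSidedIdeal.mem_ker]; exact this
  rwa [TwoSidedIdeal.ker_ringCon_mk'] at this

end Aux

/-- **Soundness and completeness of the non-commutative IPS at the level of ideal membership.**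
`1` lies in the two-sided ideal of `𝔽⟨x₁,…,x_n⟩` generated by `f₁,…,f_m`, the boolean axioms
`x_i² - x_i` and the commutator axioms `x_i·x_j - x_j·x_i` (`i < j`), iff the abelianizations
`π(f₁),…,π(f_m)` have no common zero in `{0,1}ⁿ`. -/
theorem stmt_15 (F : Type*) [Field F] (n m : ℕ)
    (f : Fin m → FreeAlgebra F (Fin n))
    (π : FreeAlgebra F (Fin n) →ₐ[F] MvPolynomial (Fin n) F)
    (hπ : π = FreeAlgebra.lift F (fun i : Fin n => (X i : MvPolynomial (Fin n) F))) :
    ((1 : FreeAlgebra F (Fin n)) ∈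
        TwoSidedIdeal.span
          (Set.range f ∪
            Set.range (fun i : Fin n =>
              FreeAlgebra.ι F i * FreeAlgebra.ι F i - FreeAlgebra.ι F i) ∪
            { p : FreeAlgebra F (Fin n) | ∃ i j : Fin n, i < j ∧
                p = FreeAlgebra.ι F i * FreeAlgebra.ι F j
                    - FreeAlgebra.ι F j * FreeAlgebra.ι F i })) ↔
      ¬ ∃ e : Fin n → F, (∀ i, e i = 0 ∨ e i = 1) ∧ ∀ j, eval e (π (f j)) = 0 := by
  set G : Set (FreeAlgebra F (Fin n)) :=
    Set.range f ∪
      Set.range (fun i : Fin n =>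
        FreeAlgebra.ι F i * FreeAlgebra.ι F i - FreeAlgebra.ι F i) ∪ commSet F n with hG
  show 1 ∈ TwoSidedIdeal.span G ↔ _
  have hπX : ∀ i, π (FreeAlgebra.ι F i) = X i := by
    intro i; rw [hπ]; simp [FreeAlgebra.lift_ι_apply]
  have hπsurj : Function.Surjective π := by
    intro q
    have hq : q ∈ π.range := by
      have htop : (⊤ : Subalgebra F (MvPolynomial (Fin n) F)) ≤ π.range := by
        rw [← MvPolynomial.adjoin_range_X]
        apply Algebra.adjoin_le
        rintro _ ⟨i, rfl⟩
        exact ⟨FreeAlgebra.ι F i, hπX i⟩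
      exact htop trivial
    exact hq
  constructor
  · -- soundness
    rintro h1 ⟨e, he, hz⟩
    set χ : FreeAlgebra F (Fin n) →+* F := (MvPolynomial.eval e).comp π.toRingHom with hχ
    rw [TwoSidedIdeal.mem_span_iff] at h1
    have h1' := h1 (TwoSidedIdeal.ker χ) ?_
    · rw [TwoSidedIdeal.mem_ker] at h1'
      simp at h1'
    · rintro p (hp | hp)
      · rcases hp with ⟨j, rfl⟩ | ⟨i, rfl⟩
        · rw [SetLike.mem_coe, TwoSidedIdeal.mem_ker]
          simpa [χ] using hz j
        · rw [SetLike.mem_coe, TwoSidedIdeal.mem_ker]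
          simp only [χ, RingHom.coe_comp, Function.comp_apply, map_sub, map_mul,
            AlgHom.toRingHom_eq_coe, RingHom.coe_coe, hπX]
          rcases he i with h | h <;> simp [h]
      · obtain ⟨i, j, _, rfl⟩ := hp
        rw [SetLike.mem_coe, TwoSidedIdeal.mem_ker]
        simp only [χ, RingHom.coe_comp, Function.comp_apply, map_sub, map_mul,
          AlgHom.toRingHom_eq_coe, RingHom.coe_coe, hπX]
        ring
  · -- completeness
    intro hno
    classical
    set S := TwoSidedIdeal.span G with hS
    -- the image of `S` under `π` is an ideal
    let Q : Ideal (MvPolynomial (Fin n) F) :=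
      { carrier := π '' (S : Set (FreeAlgebra F (Fin n)))
        add_mem' := by
          rintro _ _ ⟨a, ha, rfl⟩ ⟨b, hb, rfl⟩
          exact ⟨a + b, S.add_mem ha hb, map_add _ _ _⟩
        zero_mem' := ⟨0, S.zero_mem, map_zero _⟩
        smul_mem' := by
          rintro c _ ⟨a, ha, rfl⟩
          obtain ⟨b, rfl⟩ := hπsurj c
          exact ⟨b * a, S.mul_mem_left _ _ ha, by simp [map_mul]⟩ }
    -- the commutative ideal generated by the abelianized axioms
    set J : Ideal (MvPolynomial (Fin n) F) :=
      Ideal.span (Set.range (fun j => π (f j)) ∪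
        Set.range (fun i : Fin n => (X i : MvPolynomial (Fin n) F) * X i - X i)) with hJ
    have hJQ : J ≤ Q := by
      rw [hJ, Ideal.span_le]
      rintro _ (⟨j, rfl⟩ | ⟨i, rfl⟩)
      · exact ⟨f j, TwoSidedIdeal.subset_span (Or.inl (Or.inl ⟨j, rfl⟩)), rfl⟩
      · refine ⟨FreeAlgebra.ι F i * FreeAlgebra.ι F i - FreeAlgebra.ι F i,
          TwoSidedIdeal.subset_span (Or.inl (Or.inr ⟨i, rfl⟩)), ?_⟩
        simp [map_sub, map_mul, hπX]
    -- `1 ∈ J` by the boolean Nullstellensatz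
    have h1J : (1 : MvPolynomial (Fin n) F) ∈ J := by
      by_contra h1J
      obtain ⟨M, hM, hJM⟩ := Ideal.exists_le_maximal J ((Ideal.ne_top_iff_one J).mpr h1J)
      haveI := hM
      letI : Field (MvPolynomial (Fin n) F ⧸ M) := Ideal.Quotient.field M
      set φ : MvPolynomial (Fin n) F →+* MvPolynomial (Fin n) F ⧸ M := Ideal.Quotient.mk M
      have hbool : ∀ i : Fin n, φ (X i) = 0 ∨ φ (X i) = 1 := by
        intro i
        have : φ (X i * X i - X i) = 0 := by
          rw [Ideal.Quotient.eq_zero_iff_mem]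
          exact hJM (hJ ▸ Ideal.subset_span (Or.inr ⟨i, rfl⟩))
        have h2 : φ (X i) * (φ (X i) - 1) = 0 := by
          rw [mul_sub, mul_one, ← map_mul, ← map_sub]; exact this
        rcases mul_eq_zero.mp h2 with h | h
        · exact Or.inl h
        · exact Or.inr (by linear_combination h)
      set e : Fin n → F := fun i => if φ (X i) = 1 then 1 else 0 with he
      have heval : ∀ i, φ (X i) = algebraMap F _ (e i) := by
        intro i
        rcases hbool i with h | h
        · simp [he, h]
        · simp [he, h]
      have hkey : ∀ p : MvPolynomial (Fin n) F,
          φ p = algebraMap F _ (eval e p) := by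
        intro p
        have : (Ideal.Quotient.mkₐ F M) =
            ((Algebra.ofId F (MvPolynomial (Fin n) F ⧸ M)).comp (MvPolynomial.aeval e)) := by
          apply MvPolynomial.algHom_ext
          intro i
          simp only [Ideal.Quotient.mkₐ_eq_mk, AlgHom.comp_apply, MvPolynomial.aeval_X]
          exact (heval i).trans rfl
        have := congrArg (fun g => g p) this
        have h2 : MvPolynomial.aeval (R := F) e p = MvPolynomial.eval e p := by
          rw [← MvPolynomial.coe_aeval_eq_eval]; rfl
        simpa [Algebra.ofId_apply, h2] using this
      apply hno
      refine ⟨e, fun i => ?_, fun j => ?_⟩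
      · by_cases h : φ (X i) = 1 <;> simp [he, h]
      · have hmem : π (f j) ∈ M := hJM (hJ ▸ Ideal.subset_span (Or.inl ⟨j, rfl⟩))
        have : φ (π (f j)) = 0 := Ideal.Quotient.eq_zero_iff_mem.mpr hmem
        rw [hkey] at this
        exact (map_eq_zero_iff _ (RingHom.injective _)).mp this
    -- lift back to the free algebra
    obtain ⟨a, haS, ha1⟩ := hJQ h1J
    have hker : (1 : FreeAlgebra F (Fin n)) - a ∈ TwoSidedIdeal.span (commSet F n) := by
      apply ker_pi_le
      rw [← hπ]
      simp [map_sub, ha1]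
    have hTS : TwoSidedIdeal.span (commSet F n) ≤ S :=
      TwoSidedIdeal.span_mono (fun p hp => Or.inr hp)
    have : (1 : FreeAlgebra F (Fin n)) = a + (1 - a) := by abel
    rw [this]
    exact S.add_mem haS (hTS hker)
end
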